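/- arXiv:1412.1543 — 8 statements merged into one kernel-verified Lean document; each statement's English description precedes it below -/
import Mathlib

section
/- Let (𝒫,𝓛) be a horizontal shadow representation in general position, let a,b ∈ ℝ² and L_i ∈ 𝓛 with b ∈ S_{l_{L_i}}, and set b* := (b₁, b₁ + (l_{L_i})₂ − (l_{L_i})₁). Then X(a,b*) ⊆ X(a,b), every element of X(a,b) ∖ X(a,b*) is adjacent to L_i, and consequently for every set Z ⊆ 𝓛 with L_i ∈ Z: Z dominates X(a,b) if and only if Z dominates X(a,b*). -/
open Set

abbrev Pt : Type := ℝ × ℝ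

/-- The shadow of a point `t`. -/
def ptShadow (t : Pt) : Set Pt := {p : Pt | p.1 ≤ t.1 ∧ p.2 - p.1 ≤ t.2 - t.1}

/-- The shadow of a set of points. -/
def setShadow (L : Set Pt) : Set Pt := ⋃ t ∈ L, ptShadow t

/-- The reverse shadow of a point `t`. -/
def ptRevShadow (t : Pt) : Set Pt := {p : Pt | t.1 ≤ p.1 ∧ t.2 - t.1 ≤ p.2 - p.1}

/-- The reverse shadow of a set of points. -/
def setRevShadow (L : Set Pt) : Set Pt := ⋃ t ∈ L, ptRevShadow t

/-- The region `A_t`. -/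
def regionA (t : Pt) : Set Pt := {p : Pt | t.1 ≤ p.1 ∧ p.2 - p.1 ≤ t.2 - t.1}

/-- The region `B_t`. -/
def regionB (t : Pt) : Set Pt := {p : Pt | p.1 ≤ t.1 ∧ t.2 - t.1 ≤ p.2 - p.1}

/-- `s ∧ t := (s₁, s₁ + t₂ − t₁)`. -/
def diagMeet (s t : Pt) : Pt := (s.1, s.1 + t.2 - t.1)

/-- A closed horizontal line segment, given by its left and right endpoints. -/
structure HSeg where
  l : Pt
  r : Pt
  horiz : l.2 = r.2
  le : l.1 ≤ r.1

/-- The set of points of a horizontal segment. -/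
def HSeg.carrier (L : HSeg) : Set Pt := segment ℝ L.l L.r

/-- An element of a horizontal shadow representation: a point or a segment. -/
inductive Elem where
  | pt : Pt → Elem
  | seg : HSeg → Elem

/-- The set of points of the plane occupied by an element. -/
def Elem.carrier : Elem → Set Pt
  | .pt p => ({p} : Set Pt)
  | .seg L => L.carrier

/-- Adjacency between elements: two points are never adjacent; a point `p` and a
segment `L` are adjacent iff `p ∈ S_L`; two segments `L, L'` are adjacent iff
`L ∩ S_{L'} ≠ ∅` or `L' ∩ S_L ≠ ∅`. -/
def ElemAdj : Elem → Elem → Prop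
  | .pt _, .pt _ => False
  | .pt p, .seg L => p ∈ setShadow L.carrier
  | .seg L, .pt p => p ∈ setShadow L.carrier
  | .seg L, .seg L' =>
      (L.carrier ∩ setShadow L'.carrier).Nonempty ∨ (L'.carrier ∩ setShadow L.carrier).Nonempty

/-- `x` is dominated by the set `D`: it belongs to `D` or is adjacent to a member of `D`. -/
def DominatedBy (D : Set Elem) (x : Elem) : Prop := x ∈ D ∨ ∃ d ∈ D, ElemAdj x d

/-- `D` dominates `X`. -/
def Dominates (D X : Set Elem) : Prop := ∀ x ∈ X, DominatedBy D x

/-- A horizontal shadow representation: a finite set of points and a finite set of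
closed horizontal segments. -/
structure HSR where
  P : Set Pt
  Ls : Set HSeg
  finP : P.Finite
  finL : Ls.Finite

/-- The elements (points and segments) of a representation. -/
def HSR.elems (R : HSR) : Set Elem := (Elem.pt '' R.P) ∪ (Elem.seg '' R.Ls)

/-- All points of `𝒫` together with all endpoints of segments of `𝓛`. -/
def HSR.keyPts (R : HSR) : Set Pt := R.P ∪ ⋃ L ∈ R.Ls, ({L.l, L.r} : Set Pt)

/-- General position: all points of `𝒫` and all endpoints of segments of `𝓛` have
pairwise distinct first coordinates and pairwise distinct values of
(second coordinate minus first coordinate). -/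
def GenPos (R : HSR) : Prop :=
  ∀ s ∈ R.keyPts, ∀ t ∈ R.keyPts, s ≠ t → s.1 ≠ t.1 ∧ s.2 - s.1 ≠ t.2 - t.1

/-- `(L_j, L_{j'})` is a left-crossing pair. -/
def LeftCrossing (Lj Lj' : HSeg) : Prop := Lj.l ∈ ptShadow Lj'.l

/-- `(L_i, L_{i'})` is a right-crossing pair. -/
def RightCrossing (Li Li' : HSeg) : Prop := Li'.r ∈ ptShadow Li.r

/-- `𝓛^right_{j,j′}`. -/
def LRightPair (R : HSR) (Lj Lj' : HSeg) : Set Elem :=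
  {x | x ∈ R.elems ∧ Elem.carrier x ⊆ regionA (diagMeet Lj.l Lj'.l)}

/-- `𝓛^left_{i,i′}`. -/
def LLeftPair (R : HSR) (Li Li' : HSeg) : Set Elem :=
  {x | x ∈ R.elems ∧ Elem.carrier x ⊆ regionB (diagMeet Li.r Li'.r)}

/-- `𝓛^right_q`. -/
def LRightQ (R : HSR) (Lq : HSeg) : Set Elem :=
  {x | x ∈ R.elems ∧ ∀ p ∈ Elem.carrier x, p.2 - p.1 ≤ Lq.l.2 - Lq.l.1}

/-- The set of elements corresponding to a set of segments. -/
def segSet (Z : Set HSeg) : Set Elem := Elem.seg '' Z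

/-- `(L_i, L_{i'})` is an end-pair of `S`. -/
def IsEndPair (R : HSR) (S : Set Elem) (Li Li' : HSeg) : Prop :=
  RightCrossing Li Li' ∧ Elem.seg Li ∈ S ∧ Elem.seg Li' ∈ S ∧ S ⊆ LLeftPair R Li Li'

/-- `(L_j, L_{j'})` is a start-pair of `S`. -/
def IsStartPair (R : HSR) (S : Set Elem) (Lj Lj' : HSeg) : Prop :=
  LeftCrossing Lj Lj' ∧ Elem.seg Lj ∈ S ∧ Elem.seg Lj' ∈ S ∧ S ⊆ LRightPair R Lj Lj'

/-- `L_q` is a diagonally leftmost segment of `S`. -/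
def IsDiagLeftmost (R : HSR) (S : Set Elem) (Lq : HSeg) : Prop :=
  ∃ Lj, Elem.seg Lj ∈ S ∧ IsStartPair R S Lj Lq

/-- The region `R(a,b)`. -/
def regionR (a b : Pt) : Set Pt :=
  {p : Pt | p.1 < b.1 ∧ b.2 - b.1 ≤ p.2 - p.1 ∧ p.2 - p.1 ≤ a.2 - a.1}

/-- The set `X(a,b)` of elements entirely contained in `R(a,b)`. -/
def Xab (R : HSR) (a b : Pt) : Set Elem :=
  {x | x ∈ R.elems ∧ Elem.carrier x ⊆ regionR a b}

/-- A `BD(a,b,q,i,i′)`-instance. -/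
def BDInstance (R : HSR) (a b : Pt) (Lq Li Li' : HSeg) : Prop :=
  Lq ∈ R.Ls ∧ Li ∈ R.Ls ∧ Li' ∈ R.Ls ∧ RightCrossing Li Li' ∧
    Elem.seg Lq ∈ LLeftPair R Li Li' ∧ Elem.seg Li ∈ LRightQ R Lq ∧
    Elem.seg Li' ∈ LRightQ R Lq ∧ b.1 ≤ Li.r.1

/-- A `BD(a,b,q,i,i′)`-solution: a set `Z ⊆ 𝓛` dominating `X(a,b)`, with `(L_i,L_{i'})`
as an end-pair and `L_q` as a diagonally leftmost segment. -/
def BDSolution (R : HSR) (a b : Pt) (Lq Li Li' : HSeg) (Z : Set HSeg) : Prop :=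
  Z ⊆ R.Ls ∧ Dominates (segSet Z) (Xab R a b) ∧
    IsEndPair R (segSet Z) Li Li' ∧ IsDiagLeftmost R (segSet Z) Lq

/-- A minimum-cardinality `BD(a,b,q,i,i′)`-solution. -/
def IsMinBDSolution (R : HSR) (a b : Pt) (Lq Li Li' : HSeg) (Z : Set HSeg) : Prop :=
  BDSolution R a b Lq Li Li' Z ∧
    ∀ Z' : Set HSeg, BDSolution R a b Lq Li Li' Z' → Z.ncard ≤ Z'.ncard

/-- If `b ∈ S_{l_{L_i}}` and `b* = (b₁, b₁ + (l_{L_i})₂ − (l_{L_i})₁)`,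
then `X(a,b*) ⊆ X(a,b)`, every element of `X(a,b) ∖ X(a,b*)` is adjacent to `L_i`, and
for every `Z ⊆ 𝓛` with `L_i ∈ Z`, `Z` dominates `X(a,b)` iff `Z` dominates `X(a,b*)`. -/
theorem stmt5 (R : HSR) (hgp : GenPos R) (a b : Pt) (Li : HSeg) (hLi : Li ∈ R.Ls)
    (hb : b ∈ ptShadow Li.l) :
    Xab R a (diagMeet b Li.l) ⊆ Xab R a b ∧
    (∀ x ∈ Xab R a b \ Xab R a (diagMeet b Li.l), ElemAdj x (Elem.seg Li)) ∧
    (∀ Z : Set HSeg, Z ⊆ R.Ls → Li ∈ Z →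
      (Dominates (segSet Z) (Xab R a b) ↔ Dominates (segSet Z) (Xab R a (diagMeet b Li.l)))) := by
  obtain ⟨hb1, hb2⟩ := hb
  have hsub : Xab R a (diagMeet b Li.l) ⊆ Xab R a b := by
    rintro x ⟨hx, hcar⟩
    refine ⟨hx, fun p hp => ?_⟩
    obtain ⟨h1, h2, h3⟩ := hcar hp
    exact ⟨h1, by simp [diagMeet] at h1 h2 ⊢; linarith, h3⟩
  have hadj : ∀ x ∈ Xab R a b \ Xab R a (diagMeet b Li.l), ElemAdj x (Elem.seg Li) := by
    rintro x ⟨⟨hx, hcar⟩, hnot⟩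
    have : ∃ p ∈ Elem.carrier x, p ∉ regionR a (diagMeet b Li.l) := by
      by_contra h
      push_neg at h
      exact hnot ⟨hx, h⟩
    obtain ⟨p, hp, hpn⟩ := this
    obtain ⟨h1, h2, h3⟩ := hcar hp
    have hps : p ∈ ptShadow Li.l := by
      constructor
      · linarith
      · by_contra h
        push_neg at h
        exact hpn ⟨h1, by simp [diagMeet]; linarith, h3⟩
    have hmem : p ∈ setShadow Li.carrier := by
      refine mem_iUnion₂.mpr ⟨Li.l, ?_, hps⟩
      exact left_mem_segment ℝ Li.l Li.r
    cases x with
    | pt q =>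
        have : q = p := hp.symm
        simpa [ElemAdj, this] using hmem
    | seg L => exact Or.inl ⟨p, hp, hmem⟩
  refine ⟨hsub, hadj, fun Z hZ hLiZ => ?_⟩
  constructor
  · intro hd x hx
    exact hd x (hsub hx)
  · intro hd x hx
    by_cases hxs : x ∈ Xab R a (diagMeet b Li.l)
    · exact hd x hxs
    · exact Or.inr ⟨Elem.seg Li, ⟨Li, hLiZ, rfl⟩, hadj x ⟨hx, hxs⟩⟩
end

section
/- Let (𝒫,𝓛) be a horizontal shadow representation in general position and let (a,b,q,i,i′) be a BD-instance such that some BD(a,b,q,i,i′)-solution exists, the set {L_q,L_i,L_{i′}} does not dominate X(a,b), R(a,b) is not contained in S_{L_i}, and b ∉ S_{l_{L_i}}. Let c ∈ ℝ² and L_{q′},L_j,L_{j′} ∈ 𝓛 satisfy: (1) L_{q′} ∈ (𝓛^right_q ∩ 𝓛^left_{i,i′}) ∖ {L_i}; (2) (L_j,L_{j′}) is a right-crossing pair with L_j,L_{j′} ∈ (𝓛^right_q ∩ 𝓛^left_{i,i′}) ∖ {L_i}, and L_{j′} = L_{i′} whenever L_i ≠ L_{i′}; (3) L_{q′} ∈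 𝓛^left_{j,j′} and L_j,L_{j′} ∈ 𝓛^right_{q′}; (4) c = r_{L_j}∧b if (r_{L_j})₁ ≤ b₁, and c = b otherwise; (5) {L_j,L_{j′}} dominates X(a,b) ∖ X(a,c). Then for every BD(a,c,q′,j,j′)-solution Z′, the set {L_q,L_i} ∪ Z′ is a BD(a,b,q,i,i′)-solution. -/
open Set

lemma hseg_carrier_bounds (L : HSeg) {p : Pt} (hp : p ∈ L.carrier) :
    L.l.1 ≤ p.1 ∧ p.1 ≤ L.r.1 ∧ p.2 = L.l.2 := by
  obtain ⟨u, v, hu, hv, huv, rfl⟩ := hp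
  have h1 : (u • L.l + v • L.r).1 = u * L.l.1 + v * L.r.1 := rfl
  have h2 : (u • L.l + v • L.r).2 = u * L.l.2 + v * L.r.2 := rfl
  have hle := L.le
  have hh := L.horiz
  have hu' : u = 1 - v := by linarith
  subst hu'
  refine ⟨?_, ?_, ?_⟩
  · rw [h1]; nlinarith [mul_nonneg hv (sub_nonneg.2 hle)]
  · rw [h1]; nlinarith [mul_nonneg hu (sub_nonneg.2 hle)]
  · rw [h2, ← hh]; ring

lemma dominatedBy_mono {D D' : Set Elem} (h : D ⊆ D') {x : Elem} (hx : DominatedBy D x) :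
    DominatedBy D' x := by
  rcases hx with h1 | ⟨d, hd, ha⟩
  · exact Or.inl (h h1)
  · exact Or.inr ⟨d, h hd, ha⟩

lemma mem_segSet {Z : Set HSeg} {L : HSeg} : Elem.seg L ∈ segSet Z ↔ L ∈ Z := by
  constructor
  · rintro ⟨L', hL', hEq⟩
    cases hEq
    exact hL'
  · intro h; exact ⟨L, h, rfl⟩

lemma seg_mem_elems {R : HSR} {L : HSeg} (h : L ∈ R.Ls) : Elem.seg L ∈ R.elems :=
  Or.inr ⟨L, h, rfl⟩

/-- Composition step for the `BD` recursion (Lemma on combining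
`{L_q, L_i}` with a `BD(a,c,q′,j,j′)`-solution). -/
theorem stmt6 (R : HSR) (hgp : GenPos R) (a b : Pt) (Lq Li Li' : HSeg)
    (hinst : BDInstance R a b Lq Li Li')
    (hex : ∃ Z : Set HSeg, BDSolution R a b Lq Li Li' Z)
    (hndom : ¬ Dominates (segSet {Lq, Li, Li'}) (Xab R a b))
    (hRab : ¬ regionR a b ⊆ setShadow Li.carrier)
    (hb : b ∉ ptShadow Li.l)
    (c : Pt) (Lq' Lj Lj' : HSeg)
    (h1 : Elem.seg Lq' ∈ LRightQ R Lq ∧ Elem.seg Lq' ∈ LLeftPair R Li Li' ∧ Lq' ≠ Li)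
    (h2 : RightCrossing Lj Lj' ∧
      (Elem.seg Lj ∈ LRightQ R Lq ∧ Elem.seg Lj ∈ LLeftPair R Li Li' ∧ Lj ≠ Li) ∧
      (Elem.seg Lj' ∈ LRightQ R Lq ∧ Elem.seg Lj' ∈ LLeftPair R Li Li' ∧ Lj' ≠ Li) ∧
      (Li ≠ Li' → Lj' = Li'))
    (h3 : Elem.seg Lq' ∈ LLeftPair R Lj Lj' ∧
      Elem.seg Lj ∈ LRightQ R Lq' ∧ Elem.seg Lj' ∈ LRightQ R Lq')
    (h4 : (Lj.r.1 ≤ b.1 → c = diagMeet Lj.r b) ∧ (¬ Lj.r.1 ≤ b.1 → c = b))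
    (h5 : Dominates (segSet {Lj, Lj'}) (Xab R a b \ Xab R a c)) :
    ∀ Z' : Set HSeg, BDSolution R a c Lq' Lj Lj' Z' →
      BDSolution R a b Lq Li Li' (({Lq, Li} : Set HSeg) ∪ Z') := by
  intro Z' hZ'
  obtain ⟨hqL, hiL, hi'L, hrc, hqLeft, hiRQ, hi'RQ, hb1⟩ := hinst
  obtain ⟨hZ'L, hZ'dom, hZ'end, hZ'dl⟩ := hZ'
  obtain ⟨hjjrc, hjZ', hj'Z', hZ'left⟩ := hZ'end
  obtain ⟨Lk, hLkZ', hlc, _, hLq'Z', hZ'right⟩ := hZ'dl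
  set S : Set HSeg := ({Lq, Li} : Set HSeg) ∪ Z' with hSdef
  have hSsub : S ⊆ R.Ls := by
    rintro L (hL | hL)
    · rcases hL with rfl | rfl
      · exact hqL
      · exact hiL
    · exact hZ'L hL
  have hqS : Elem.seg Lq ∈ segSet S := mem_segSet.2 (Or.inl (Or.inl rfl))
  have hiS : Elem.seg Li ∈ segSet S := mem_segSet.2 (Or.inl (Or.inr rfl))
  have hZ'S : segSet Z' ⊆ segSet S := by
    rintro x ⟨L, hL, rfl⟩
    exact mem_segSet.2 (Or.inr hL)
  -- diagonal bound for all members of S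
  have hdiag : ∀ L ∈ S, ∀ p ∈ L.carrier, p.2 - p.1 ≤ Lq.l.2 - Lq.l.1 := by
    rintro L (hL | hL) p hp
    · rcases hL with rfl | rfl
      · obtain ⟨h1, _, h3⟩ := hseg_carrier_bounds L hp
        linarith
      · exact hiRQ.2 p hp
    · have hx : Elem.seg L ∈ LRightPair R Lk Lq' := hZ'right (mem_segSet.2 hL)
      have hpA : p ∈ regionA (diagMeet Lk.l Lq'.l) := hx.2 hp
      have hA2 : p.2 - p.1 ≤ Lq'.l.2 - Lq'.l.1 := by
        have := hpA.2
        simp only [diagMeet] at this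
        linarith
      have hA3 : Lq'.l.2 - Lq'.l.1 ≤ Lq.l.2 - Lq.l.1 :=
        h1.1.2 Lq'.l (left_mem_segment ℝ Lq'.l Lq'.r)
      linarith
  refine ⟨hSsub, ?_, ?_, ?_⟩
  · -- domination
    intro x hx
    by_cases hxc : x ∈ Xab R a c
    · exact dominatedBy_mono hZ'S (hZ'dom x hxc)
    · refine dominatedBy_mono ?_ (h5 x ⟨hx, hxc⟩)
      rintro y ⟨L, hL, rfl⟩
      rcases hL with rfl | rfl
      · exact hZ'S hjZ'
      · exact hZ'S hj'Z'
  · -- end pair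
    have hi'S : Elem.seg Li' ∈ segSet S := by
      by_cases hii : Li = Li'
      · exact hii ▸ hiS
      · exact (h2.2.2.2 hii) ▸ hZ'S hj'Z'
    refine ⟨hrc, hiS, hi'S, ?_⟩
    rintro x ⟨L, hL, rfl⟩
    rcases hL with (rfl | rfl) | hL
    · exact hqLeft
    · refine ⟨seg_mem_elems hiL, ?_⟩
      intro p hp
      obtain ⟨h1, h2, h3⟩ := hseg_carrier_bounds L hp
      have hh := L.horiz
      have hrc1 := hrc.1
      have hrc2 := hrc.2
      constructor
      · simpa [diagMeet] using h2
      · simp only [diagMeet]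
        linarith
    · have hx : Elem.seg L ∈ LLeftPair R Lj Lj' := hZ'left (mem_segSet.2 hL)
      refine ⟨hx.1, ?_⟩
      -- regionB (diagMeet Lj.r Lj'.r) ⊆ regionB (diagMeet Li.r Li'.r)
      have hj1 : Lj.r.1 ≤ Li.r.1 := by
        have := (h2.2.1.2.1).2 (right_mem_segment ℝ Lj.l Lj.r)
        simpa [diagMeet] using this.1
      have hj2 : Li'.r.2 - Li'.r.1 ≤ Lj'.r.2 - Lj'.r.1 := by
        have := (h2.2.2.1.2.1).2 (right_mem_segment ℝ Lj'.l Lj'.r)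
        have h := this.2
        simp only [diagMeet] at h
        linarith
      intro p hp
      have hpB := hx.2 hp
      simp only [regionB, diagMeet, Set.mem_setOf_eq] at hpB ⊢
      constructor
      · linarith [hpB.1]
      · linarith [hpB.2]
  · -- diagonally leftmost
    have hSfin : S.Finite := Set.Finite.union (Set.toFinite _) (R.finL.subset hZ'L)
    have hSne : S.Nonempty := ⟨Lq, Or.inl (Or.inl rfl)⟩
    obtain ⟨L0, hL0S, hL0min⟩ := Set.exists_min_image S (fun L => L.l.1) hSfin hSne
    refine ⟨L0, mem_segSet.2 hL0S, ?_, mem_segSet.2 hL0S, hqS, ?_⟩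
    · -- LeftCrossing L0 Lq
      refine ⟨hL0min Lq (Or.inl (Or.inl rfl)), ?_⟩
      exact hdiag L0 hL0S L0.l (left_mem_segment ℝ L0.l L0.r)
    · rintro x ⟨L, hL, rfl⟩
      refine ⟨seg_mem_elems (hSsub hL), ?_⟩
      intro p hp
      obtain ⟨h1, _, _⟩ := hseg_carrier_bounds L hp
      constructor
      · simp only [diagMeet]
        exact le_trans (hL0min L hL) h1
      · have := hdiag L hL p hp
        simp only [diagMeet]
        linarith
end

section
/- Let (𝒫,𝓛) be a horizontal shadow representation in general position and let (a,b,q,i,i′) be a BD-instance such that some BD(a,b,q,i,i′)-solution exists, the set {L_q,L_i,L_{i′}} does not dominate X(a,b), R(a,b) is not contained in S_{L_i}, and b ∉ S_{l_{L_i}}. Let c ∈ ℝ² satisfy: (1) c ∈ R(a,b); (2) c₁ ≥ (l_{L_i})₁ and c ∉ F_{l_{L_i}}; (3) no point of 𝒫 lying in R(a,b) belongs to F_c ∩ F_{L_i}. Then for every BD(a,c,q,i,i′)-solution Z₁ and every BD(c,b,q,i,i′)-solution Z₂, the set Z₁ ∪ Z₂ is a BD(a,b,q,i,i′)-solution. 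-/
open Set

/-
Cut `R(a,b)` by the diagonal and the vertical line through `c`. An element of `X(a,b)` weakly
below the diagonal of `c` lies in `X(c,b)`; one strictly left of `c` and weakly above that
diagonal lies in `X(a,c)`. For any other element take its point `u` (the right endpoint of a
segment). Either `(l_{L_i})₁ ≤ u₁ < b₁ ≤ (r_{L_i})₁`, and then of `u` and the point of `L_i`
vertically aligned with it the lower one lies in the shadow of the upper one; or `u` is left
of `l_{L_i}` and below the diagonal of `c`, hence below that of `l_{L_i}` by (2), so
`u ∈ S_{l_{L_i}}`. The only failure is a point of `𝒫` strictly above `L_i` and right of `c`,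
which (3) excludes. As `L_i` belongs to every `BD(a,c,q,i,i′)`-solution, the union dominates
`X(a,b)`. End-pairs survive unions since `𝓛^left_{i,i′}` does not depend on the set, and of
two start-pairs for `L_q` the one whose first segment starts further left serves the union.
-/

theorem HSeg.carrier_eq (L : HSeg) : L.carrier = (fun x => (x, L.l.2)) '' Icc L.l.1 L.r.1 := by
  have hr : L.r = (L.r.1, L.l.2) := Prod.ext rfl L.horiz.symm
  rw [← segment_eq_Icc L.le, Prod.image_mk_segment_left, ← hr]
  rfl

theorem HSeg.mem_carrier_iff {L : HSeg} {p : Pt} :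
    p ∈ L.carrier ↔ L.l.1 ≤ p.1 ∧ p.1 ≤ L.r.1 ∧ p.2 = L.l.2 := by
  rw [L.carrier_eq]
  constructor
  · rintro ⟨x, hx, rfl⟩
    exact ⟨hx.1, hx.2, rfl⟩
  · rintro ⟨h₁, h₂, h₃⟩
    exact ⟨p.1, ⟨h₁, h₂⟩, by rw [← h₃]⟩

theorem HSeg.mk_mem_carrier {L : HSeg} {x : ℝ} (h₁ : L.l.1 ≤ x) (h₂ : x ≤ L.r.1) :
    (x, L.l.2) ∈ L.carrier :=
  HSeg.mem_carrier_iff.2 ⟨h₁, h₂, rfl⟩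

theorem mem_setShadow_of_mem_ptShadow {L : Set Pt} {t p : Pt} (ht : t ∈ L)
    (hp : p ∈ ptShadow t) : p ∈ setShadow L :=
  mem_biUnion ht hp

theorem mem_setRevShadow_of_mem_ptRevShadow {L : Set Pt} {t p : Pt} (ht : t ∈ L)
    (hp : p ∈ ptRevShadow t) : p ∈ setRevShadow L :=
  mem_biUnion ht hp

theorem HSR.mem_P_of_pt_mem_elems {R : HSR} {p : Pt} (h : Elem.pt p ∈ R.elems) : p ∈ R.P := by
  simpa [HSR.elems] using h

theorem DominatedBy.mono {D D' : Set Elem} {x : Elem} (hx : DominatedBy D x) (h : D ⊆ D') :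
    DominatedBy D' x :=
  hx.imp (@h x) fun ⟨d, hd, hadj⟩ => ⟨d, h hd, hadj⟩

theorem Dominates.mono {D D' X : Set Elem} (hX : Dominates D X) (h : D ⊆ D') :
    Dominates D' X :=
  fun x hx => (hX x hx).mono h

section Split

variable {a b c : Pt} {Li : HSeg}

theorem mem_regionR_right {p : Pt} (hp : p ∈ regionR a b) (hpc : p.2 - p.1 ≤ c.2 - c.1) :
    p ∈ regionR c b :=
  ⟨hp.1, hp.2.1, hpc⟩

theorem mem_regionR_left {p : Pt} (hp : p ∈ regionR a b) (hpc₁ : p.1 < c.1)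
    (hpc₂ : c.2 - c.1 ≤ p.2 - p.1) : p ∈ regionR a c :=
  ⟨hpc₁, hpc₂, hp.2.2⟩

theorem mem_regionR_or_mem_setShadow_of_mem_regionR {p : Pt} (hp : p ∈ regionR a b)
    (hbr : b.1 ≤ Li.r.1) (hlc : Li.l.1 ≤ c.1)
    (hpc : ¬ (p ∈ ptRevShadow c ∧ p ∈ setRevShadow Li.carrier)) :
    p ∈ regionR c b ∨ p ∈ regionR a c ∨ p ∈ setShadow Li.carrier := by
  rcases le_or_gt (p.2 - p.1) (c.2 - c.1) with hdiag | hdiag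
  · exact Or.inl (mem_regionR_right hp hdiag)
  rcases lt_or_ge p.1 c.1 with hx | hx
  · exact Or.inr (Or.inl (mem_regionR_left hp hx hdiag.le))
  have hs : (p.1, Li.l.2) ∈ Li.carrier := HSeg.mk_mem_carrier (hlc.trans hx) (hp.1.le.trans hbr)
  rcases le_or_gt p.2 Li.l.2 with hy | hy
  · exact Or.inr (Or.inr (mem_setShadow_of_mem_ptShadow hs ⟨le_rfl, by simp only; linarith⟩))
  · exact absurd ⟨⟨hx, hdiag.le⟩, mem_setRevShadow_of_mem_ptRevShadow hs
      ⟨le_rfl, by simp only; linarith⟩⟩ hpc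

theorem carrier_subset_regionR_or_elemAdj {L : HSeg} (hL : L.carrier ⊆ regionR a b)
    (hbr : b.1 ≤ Li.r.1) (hc : Li.l.1 ≤ c.1 ∧ c ∉ ptRevShadow Li.l) :
    L.carrier ⊆ regionR c b ∨ L.carrier ⊆ regionR a c ∨ ElemAdj (.seg L) (.seg Li) := by
  have hcLi : c.2 - c.1 < Li.l.2 - Li.l.1 := lt_of_not_ge fun h => hc.2 ⟨hc.1, h⟩
  have hLr : L.r ∈ L.carrier := right_mem_segment ℝ L.l L.r
  have hbL : L.r.1 < b.1 := (hL hLr).1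
  have hdiag {p : Pt} (hp : p ∈ L.carrier) : p.2 - p.1 ≤ L.l.2 - L.l.1 ∧
      L.r.2 - L.r.1 ≤ p.2 - p.1 := by
    obtain ⟨h₁, h₂, h₃⟩ := HSeg.mem_carrier_iff.1 hp
    have := L.horiz
    constructor <;> linarith
  rcases le_or_gt (L.l.2 - L.l.1) (c.2 - c.1) with hl | _
  · exact Or.inl fun p hp => mem_regionR_right (hL hp) ((hdiag hp).1.trans hl)
  by_cases hr : L.r.1 < c.1 ∧ c.2 - c.1 ≤ L.r.2 - L.r.1
  · refine Or.inr (Or.inl fun p hp => mem_regionR_left (hL hp) ?_ (hr.2.trans (hdiag hp).2))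
    exact (HSeg.mem_carrier_iff.1 hp).2.1.trans_lt hr.1
  refine Or.inr (Or.inr ?_)
  rcases le_or_gt Li.l.1 L.r.1 with hx | hx
  · have hs : (L.r.1, Li.l.2) ∈ Li.carrier := HSeg.mk_mem_carrier hx (hbL.le.trans hbr)
    rcases le_or_gt L.r.2 Li.l.2 with hy | hy
    · exact Or.inl ⟨L.r, hLr, mem_setShadow_of_mem_ptShadow hs ⟨le_rfl, by simp only; linarith⟩⟩
    · exact Or.inr ⟨_, hs, mem_setShadow_of_mem_ptShadow hLr ⟨le_rfl, by simp only; linarith⟩⟩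
  · have hrc : L.r.2 - L.r.1 < c.2 - c.1 := lt_of_not_ge fun h => hr ⟨hx.trans_le hc.1, h⟩
    exact Or.inl ⟨L.r, hLr, mem_setShadow_of_mem_ptShadow (left_mem_segment ℝ Li.l Li.r)
      ⟨hx.le, by linarith⟩⟩

theorem dominates_Xab_of_split {R : HSR} {D : Set Elem} (hbr : b.1 ≤ Li.r.1)
    (hc : Li.l.1 ≤ c.1 ∧ c ∉ ptRevShadow Li.l)
    (hP : ∀ p ∈ R.P, p ∈ regionR a b → ¬ (p ∈ ptRevShadow c ∧ p ∈ setRevShadow Li.carrier))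
    (hLi : Elem.seg Li ∈ D) (hac : Dominates D (Xab R a c)) (hcb : Dominates D (Xab R c b)) :
    Dominates D (Xab R a b) := by
  rintro x ⟨hxR, hx⟩
  cases x with
  | pt p =>
    have hp : p ∈ regionR a b := hx rfl
    rcases mem_regionR_or_mem_setShadow_of_mem_regionR hp hbr hc.1
        (hP p (HSR.mem_P_of_pt_mem_elems hxR) hp) with h | h | h
    · exact hcb _ ⟨hxR, singleton_subset_iff.2 h⟩
    · exact hac _ ⟨hxR, singleton_subset_iff.2 h⟩
    · exact Or.inr ⟨_, hLi, h⟩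
  | seg L =>
    rcases carrier_subset_regionR_or_elemAdj hx hbr hc with h | h | h
    · exact hcb _ ⟨hxR, h⟩
    · exact hac _ ⟨hxR, h⟩
    · exact Or.inr ⟨_, hLi, h⟩

end Split

theorem IsEndPair.union {R : HSR} {S T : Set Elem} {Li Li' : HSeg} (hS : IsEndPair R S Li Li')
    (hT : T ⊆ LLeftPair R Li Li') : IsEndPair R (S ∪ T) Li Li' :=
  ⟨hS.1, Or.inl hS.2.1, Or.inl hS.2.2.1, union_subset hS.2.2.2 hT⟩

theorem LRightPair_mono {R : HSR} {Lj Lk Lq : HSeg} (h : Lj.l.1 ≤ Lk.l.1) :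
    LRightPair R Lk Lq ⊆ LRightPair R Lj Lq := by
  refine fun x ⟨hx, hxA⟩ => ⟨hx, fun p hp => ?_⟩
  obtain ⟨h₁, h₂⟩ : Lk.l.1 ≤ p.1 ∧ p.2 - p.1 ≤ Lk.l.1 + Lq.l.2 - Lq.l.1 - Lk.l.1 := hxA hp
  exact ⟨h.trans h₁, show p.2 - p.1 ≤ Lj.l.1 + Lq.l.2 - Lq.l.1 - Lj.l.1 by linarith⟩

theorem IsStartPair.isDiagLeftmost_union {R : HSR} {S T : Set Elem} {Lj Lk Lq : HSeg}
    (hj : IsStartPair R S Lj Lq) (hk : IsStartPair R T Lk Lq) (h : Lj.l.1 ≤ Lk.l.1) :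
    IsDiagLeftmost R (S ∪ T) Lq :=
  ⟨Lj, Or.inl hj.2.1, hj.1, Or.inl hj.2.1, Or.inl hj.2.2.1,
    union_subset hj.2.2.2 (hk.2.2.2.trans (LRightPair_mono h))⟩

theorem IsDiagLeftmost.union {R : HSR} {S T : Set Elem} {Lq : HSeg}
    (hS : IsDiagLeftmost R S Lq) (hT : IsDiagLeftmost R T Lq) :
    IsDiagLeftmost R (S ∪ T) Lq := by
  obtain ⟨Lj, -, hj⟩ := hS
  obtain ⟨Lk, -, hk⟩ := hT
  rcases le_total Lj.l.1 Lk.l.1 with h | h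
  · exact hj.isDiagLeftmost_union hk h
  · exact union_comm S T ▸ hk.isDiagLeftmost_union hj h

theorem stmt8_general (R : HSR) (a b : Pt) (Lq Li Li' : HSeg)
    (hinst : BDInstance R a b Lq Li Li')
    (c : Pt)
    (hc2 : Li.l.1 ≤ c.1 ∧ c ∉ ptRevShadow Li.l)
    (hc3 : ∀ p ∈ R.P, p ∈ regionR a b →
      ¬ (p ∈ ptRevShadow c ∧ p ∈ setRevShadow Li.carrier)) :
    ∀ Z₁ Z₂ : Set HSeg, BDSolution R a c Lq Li Li' Z₁ → BDSolution R c b Lq Li Li' Z₂ →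
      BDSolution R a b Lq Li Li' (Z₁ ∪ Z₂) := by
  obtain ⟨-, -, -, -, -, -, -, hbr⟩ := hinst
  rintro Z₁ Z₂ ⟨hZ₁, hdom₁, hend₁, hdiag₁⟩ ⟨hZ₂, hdom₂, hend₂, hdiag₂⟩
  have hseg : segSet (Z₁ ∪ Z₂) = segSet Z₁ ∪ segSet Z₂ := image_union _ _ _
  refine ⟨union_subset hZ₁ hZ₂, ?_, ?_, ?_⟩ <;> rw [hseg]
  · exact dominates_Xab_of_split hbr hc2 hc3 (Or.inl hend₁.2.1)
      (hdom₁.mono subset_union_left) (hdom₂.mono subset_union_right)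
  · exact hend₁.union hend₂.2.2.2
  · exact hdiag₁.union hdiag₂

/-- Splitting step of the first kind: for a suitable splitting point `c`,
the union of a `BD(a,c,q,i,i′)`-solution and a `BD(c,b,q,i,i′)`-solution is a
`BD(a,b,q,i,i′)`-solution. -/
theorem stmt8 (R : HSR) (hgp : GenPos R) (a b : Pt) (Lq Li Li' : HSeg)
    (hinst : BDInstance R a b Lq Li Li')
    (hex : ∃ Z : Set HSeg, BDSolution R a b Lq Li Li' Z)
    (hndom : ¬ Dominates (segSet {Lq, Li, Li'}) (Xab R a b))
    (hRab : ¬ regionR a b ⊆ setShadow Li.carrier)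
    (hb : b ∉ ptShadow Li.l)
    (c : Pt)
    (hc1 : c ∈ regionR a b)
    (hc2 : Li.l.1 ≤ c.1 ∧ c ∉ ptRevShadow Li.l)
    (hc3 : ∀ p ∈ R.P, p ∈ regionR a b →
      ¬ (p ∈ ptRevShadow c ∧ p ∈ setRevShadow Li.carrier)) :
    ∀ Z₁ Z₂ : Set HSeg, BDSolution R a c Lq Li Li' Z₁ → BDSolution R c b Lq Li Li' Z₂ →
      BDSolution R a b Lq Li Li' (Z₁ ∪ Z₂) :=
  stmt8_general R a b Lq Li Li' hinst c hc2 hc3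
end

section
/- Let (𝒫,𝓛) be a horizontal shadow representation in general position and let (a,b,q,i,i′) be a BD-instance such that some BD(a,b,q,i,i′)-solution exists, the set {L_q,L_i,L_{i′}} does not dominate X(a,b), R(a,b) is not contained in S_{L_i}, and b ∉ S_{l_{L_i}}. Let c′ ∈ ℝ² and L_{q′} ∈ 𝓛 satisfy: (1) c′ ∈ R(a,b) and c′ ∈ F_{l_{L_i}}; (2) L_i, L_{i′} ∈ 𝓛^right_{q′}; (3) L_{q′} ∈ 𝓛^right_q ∩ 𝓛^left_{i,i′} and l_{L_{q′}} ∈ F_{l_{L_i}}; (4) c′₂ − c′₁ = (l_{L_{q′}})₂ − (l_{L_{q′}})₁ or c′₂ − c′₁ = b₂ − b₁; (5) no point of 𝒫 lying in R(a,b) belongs to F_{c′}. Then for every BD(a,c′,q,i,i′)-solution Z₁ and every BD(c′,b,q′,i,i′)-solution Z₂, the set Z₁ ∪ Z₂ is a BD(a,b,q,i,i′)-solution. -/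
open Set

/-- Splitting step of the second kind: for a suitable splitting point `c′`
and segment `L_{q′}`, the union of a `BD(a,c′,q,i,i′)`-solution and a
`BD(c′,b,q′,i,i′)`-solution is a `BD(a,b,q,i,i′)`-solution. -/
theorem stmt9 (R : HSR) (hgp : GenPos R) (a b : Pt) (Lq Li Li' : HSeg)
    (hinst : BDInstance R a b Lq Li Li')
    (hex : ∃ Z : Set HSeg, BDSolution R a b Lq Li Li' Z)
    (hndom : ¬ Dominates (segSet {Lq, Li, Li'}) (Xab R a b))
    (hRab : ¬ regionR a b ⊆ setShadow Li.carrier)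
    (hb : b ∉ ptShadow Li.l)
    (c' : Pt) (Lq' : HSeg) (hLq' : Lq' ∈ R.Ls)
    (h1 : c' ∈ regionR a b ∧ c' ∈ ptRevShadow Li.l)
    (h2 : Elem.seg Li ∈ LRightQ R Lq' ∧ Elem.seg Li' ∈ LRightQ R Lq')
    (h3 : Elem.seg Lq' ∈ LRightQ R Lq ∧ Elem.seg Lq' ∈ LLeftPair R Li Li' ∧
      Lq'.l ∈ ptRevShadow Li.l)
    (h4 : c'.2 - c'.1 = Lq'.l.2 - Lq'.l.1 ∨ c'.2 - c'.1 = b.2 - b.1)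
    (h5 : ∀ p ∈ R.P, p ∈ regionR a b → p ∉ ptRevShadow c') :
    ∀ Z₁ Z₂ : Set HSeg, BDSolution R a c' Lq Li Li' Z₁ → BDSolution R c' b Lq' Li Li' Z₂ →
      BDSolution R a b Lq Li Li' (Z₁ ∪ Z₂) := by

  intro Z₁ Z₂ hZ1 hZ2
  obtain ⟨hZ1sub, hZ1dom, ⟨hrc, hLi1, hLi'1, hend1⟩, Lj, hLjZ1, h! ⟩ := hZ1
  obtain ⟨hcross1, hLjZ1', hLqZ1, hstart1⟩ := h!
  obtain ⟨hZ2sub, hZ2dom, ⟨_, hLi2, hLi'2, hend2⟩, Lj₂, hLj2Z2, h!! ⟩ := hZ2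
  obtain ⟨hcross2, hLj2Z2', hLq'Z2, hstart2⟩ := h!!
  have hU : segSet (Z₁ ∪ Z₂) = segSet Z₁ ∪ segSet Z₂ := Set.image_union _ _ _
  have hsub1 : segSet Z₁ ⊆ segSet (Z₁ ∪ Z₂) := by rw [hU]; exact Set.subset_union_left
  have hsub2 : segSet Z₂ ⊆ segSet (Z₁ ∪ Z₂) := by rw [hU]; exact Set.subset_union_right
  -- diag of Lq'.l is at most diag of Lq.l
  have hdq : Lq'.l.2 - Lq'.l.1 ≤ Lq.l.2 - Lq.l.1 :=
    h3.1.2 Lq'.l (left_mem_segment ℝ Lq'.l Lq'.r)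
  have hc'1 : Li.l.1 ≤ c'.1 := h1.2.1
  have hc'2 : Li.l.2 - Li.l.1 ≤ c'.2 - c'.1 := h1.2.2
  refine ⟨Set.union_subset hZ1sub hZ2sub, ?_, ?_, ?_⟩
  · -- domination
    rintro x ⟨hxel, hxcar⟩
    by_cases hF : ∃ p ∈ Elem.carrier x, p ∈ ptRevShadow c'
    · obtain ⟨p, hp, hpF⟩ := hF
      cases x with
      | pt p' =>
        exfalso
        have hp' : p = p' := hp
        rcases hxel with ⟨q, hq, heq⟩ | ⟨L, hL, heq⟩
        · have hq' : q = p' := by injection heq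
          subst hq'
          exact h5 q hq (hxcar (Set.mem_singleton q)) (hp' ▸ hpF)
        · simp at heq
      | seg L =>
        right
        refine ⟨Elem.seg Li, hsub1 hLi1, Or.inr ⟨Li.l, left_mem_segment ℝ Li.l Li.r, ?_⟩⟩
        exact Set.mem_biUnion hp ⟨le_trans hc'1 hpF.1, le_trans hc'2 hpF.2⟩
    · push_neg at hF
      by_cases hA : ∀ p ∈ Elem.carrier x, p.2 - p.1 ≤ c'.2 - c'.1
      · refine dominatedBy_mono hsub2 (hZ2dom x ⟨hxel, fun p hp => ?_⟩)
        exact ⟨(hxcar hp).1, (hxcar hp).2.1, hA p hp⟩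
      · by_cases hB : ∀ p ∈ Elem.carrier x, c'.2 - c'.1 ≤ p.2 - p.1
        · refine dominatedBy_mono hsub1 (hZ1dom x ⟨hxel, fun p hp => ?_⟩)
          have hnF := hF p hp
          have hx1 : p.1 < c'.1 := by
            by_contra h
            exact hnF ⟨le_of_not_gt h, hB p hp⟩
          exact ⟨hx1, hB p hp, (hxcar hp).2.2⟩
        · push_neg at hA hB
          obtain ⟨p₂, hp₂, hd₂⟩ := hA
          obtain ⟨p₁, hp₁, hd₁⟩ := hB
          have hc4 : c'.2 - c'.1 = Lq'.l.2 - Lq'.l.1 := by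
            rcases h4 with h | h
            · exact h
            · exfalso; have := (hxcar hp₁).2.1; linarith
          cases x with
          | pt p' =>
            exfalso
            have e1 : p₁ = p' := hp₁
            have e2 : p₂ = p' := hp₂
            rw [e1] at hd₁; rw [e2] at hd₂; linarith
          | seg L =>
            set d₁ := p₁.2 - p₁.1 with hd1def
            set d₂ := p₂.2 - p₂.1 with hd2def
            set c := c'.2 - c'.1 with hcdef
            have hlt : d₁ < d₂ := by linarith
            set t : ℝ := (c - d₁) / (d₂ - d₁) with htdef
            have ht0 : 0 ≤ t := div_nonneg (by linarith) (by linarith)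
            have ht1 : t ≤ 1 := by
              rw [div_le_one (by linarith)]; linarith
            have hkey : t * (d₂ - d₁) = c - d₁ := div_mul_cancel₀ _ (by linarith)
            set p : Pt := (1 - t) • p₁ + t • p₂ with hpdef
            have hpmem : p ∈ L.carrier :=
              (convex_segment L.l L.r).segment_subset hp₁ hp₂
                ⟨1 - t, t, by linarith, ht0, by ring, rfl⟩
            have hp1 : p.1 = (1 - t) * p₁.1 + t * p₂.1 := rfl
            have hp2 : p.2 = (1 - t) * p₁.2 + t * p₂.2 := rfl
            have hpd : p.2 - p.1 = c := by
              rw [hp1, hp2]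
              have : (1 - t) * p₁.2 + t * p₂.2 - ((1 - t) * p₁.1 + t * p₂.1)
                  = d₁ + t * (d₂ - d₁) := by rw [hd1def, hd2def]; ring
              rw [this, hkey]; ring
            right
            refine ⟨Elem.seg Lq', hsub2 hLq'Z2, ?_⟩
            rcases le_total p.1 Lq'.l.1 with hle | hle
            · exact Or.inl ⟨p, hpmem,
                Set.mem_biUnion (left_mem_segment ℝ Lq'.l Lq'.r) ⟨hle, by rw [hpd]; linarith [hc4]⟩⟩
            · exact Or.inr ⟨Lq'.l, left_mem_segment ℝ Lq'.l Lq'.r,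
                Set.mem_biUnion hpmem ⟨hle, by rw [hpd]; linarith [hc4]⟩⟩
  · -- end pair
    refine ⟨hrc, hsub1 hLi1, hsub1 hLi'1, ?_⟩
    rw [hU]; exact Set.union_subset hend1 hend2
  · -- diagonally leftmost
    have hc2a : Lj₂.l.1 ≤ Lq'.l.1 := hcross2.1
    have hc2b : Lj₂.l.2 - Lj₂.l.1 ≤ Lq'.l.2 - Lq'.l.1 := hcross2.2
    have hc1a : Lj.l.1 ≤ Lq.l.1 := hcross1.1
    have hc1b : Lj.l.2 - Lj.l.1 ≤ Lq.l.2 - Lq.l.1 := hcross1.2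
    rcases le_total Lj.l.1 Lj₂.l.1 with hle | hle
    · refine ⟨Lj, hsub1 hLjZ1, hcross1, hsub1 hLjZ1, hsub1 hLqZ1, ?_⟩
      rw [hU]
      rintro x (hx | hx)
      · exact hstart1 hx
      · obtain ⟨hel, hcar⟩ := hstart2 hx
        refine ⟨hel, fun p hp => ?_⟩
        obtain ⟨ha1, ha2⟩ := hcar hp
        simp only [regionA, diagMeet, Set.mem_setOf_eq] at ha1 ha2 ⊢
        constructor <;> [linarith; linarith]
    · refine ⟨Lj₂, hsub2 hLj2Z2, ⟨by simpa using le_trans hle hc1a, by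
        show Lj₂.l.2 - Lj₂.l.1 ≤ Lq.l.2 - Lq.l.1; linarith⟩,
        hsub2 hLj2Z2, hsub1 hLqZ1, ?_⟩
      rw [hU]
      rintro x (hx | hx)
      · obtain ⟨hel, hcar⟩ := hstart1 hx
        refine ⟨hel, fun p hp => ?_⟩
        obtain ⟨ha1, ha2⟩ := hcar hp
        simp only [regionA, diagMeet, Set.mem_setOf_eq] at ha1 ha2 ⊢
        constructor <;> [linarith; linarith]
      · obtain ⟨hel, hcar⟩ := hstart2 hx
        refine ⟨hel, fun p hp => ?_⟩
        obtain ⟨ha1, ha2⟩ := hcar hp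
        simp only [regionA, diagMeet, Set.mem_setOf_eq] at ha1 ha2 ⊢
        constructor <;> [linarith; linarith]
end

section
/- Let (𝒫,𝓛) be a horizontal shadow representation, (L_j,L_{j′}) a left-crossing pair and (L_i,L_{i′}) a right-crossing pair of (𝒫,𝓛), with l := l_{L_j}∧l_{L_{j′}} and r := r_{L_i}∧r_{L_{i′}}. If a point p ∈ 𝒫 satisfies p ∈ S_l ∪ S_r, then p ∈ S_{L_{j′}} or p ∈ S_{L_i}; that is, p is adjacent to L_{j′} or to L_i. -/
open Set

/-- If a point `p ∈ 𝒫` lies in `S_l ∪ S_r`, where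
`l = l_{L_j} ∧ l_{L_{j′}}` and `r = r_{L_i} ∧ r_{L_{i′}}`, then `p` is adjacent to
`L_{j′}` or to `L_i`. -/
theorem stmt12 (R : HSR) (Lj Lj' Li Li' : HSeg)
    (hj : Lj ∈ R.Ls) (hj' : Lj' ∈ R.Ls) (hi : Li ∈ R.Ls) (hi' : Li' ∈ R.Ls)
    (hlc : LeftCrossing Lj Lj') (hrc : RightCrossing Li Li')
    (p : Pt) (hp : p ∈ R.P)
    (hmem : p ∈ ptShadow (diagMeet Lj.l Lj'.l) ∪ ptShadow (diagMeet Li.r Li'.r)) :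
    p ∈ setShadow Lj'.carrier ∨ p ∈ setShadow Li.carrier := by
  obtain ⟨h1, h2⟩ | ⟨h1, h2⟩ := hmem
  · left
    refine mem_iUnion₂.mpr ⟨Lj'.l, left_mem_segment ℝ _ _, ?_, ?_⟩
    · exact h1.trans hlc.1
    · simp only [diagMeet] at h2; linarith
  · right
    refine mem_iUnion₂.mpr ⟨Li.r, right_mem_segment ℝ _ _, ?_, ?_⟩
    · exact h1
    · refine le_trans ?_ hrc.2
      simp only [diagMeet] at h2; linarith
end

section
/- Let (𝒫,𝓛) be a horizontal shadow representation in general position, (L_j,L_{j′}) a left-crossing pair and (L_i,L_{i′}) a right-crossing pair of (𝒫,𝓛), with l := l_{L_j}∧l_{L_{j′}} and r := r_{L_i}∧r_{L_{i′}}. If a segment L_t ∈ 𝓛 satisfies L_t ⊆ (ℝ² ∖ B_l) ∩ (ℝ² ∖ A_r) and L_t ∉ 𝓛^right_{j,j′} ∩ 𝓛^left_{i,i′}, then L_t is adjacent to at least one of L_j, L_{j′}, L_i, L_{i′}. -/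
open Set

/-- If a segment `L_t ∈ 𝓛` satisfies
`L_t ⊆ (ℝ² ∖ B_l) ∩ (ℝ² ∖ A_r)` and `L_t ∉ 𝓛^right_{j,j′} ∩ 𝓛^left_{i,i′}`, then
`L_t` is adjacent to one of `L_j, L_{j′}, L_i, L_{i′}`. -/
theorem stmt15 (R : HSR) (hgp : GenPos R) (Lj Lj' Li Li' : HSeg)
    (hj : Lj ∈ R.Ls) (hj' : Lj' ∈ R.Ls) (hi : Li ∈ R.Ls) (hi' : Li' ∈ R.Ls)
    (hlc : LeftCrossing Lj Lj') (hrc : RightCrossing Li Li')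
    (Lt : HSeg) (hLt : Lt ∈ R.Ls)
    (hsub : Lt.carrier ⊆ (regionB (diagMeet Lj.l Lj'.l))ᶜ ∩ (regionA (diagMeet Li.r Li'.r))ᶜ)
    (hnot : Elem.seg Lt ∉ LRightPair R Lj Lj' ∩ LLeftPair R Li Li') :
    ElemAdj (Elem.seg Lt) (Elem.seg Lj) ∨ ElemAdj (Elem.seg Lt) (Elem.seg Lj') ∨
      ElemAdj (Elem.seg Lt) (Elem.seg Li) ∨ ElemAdj (Elem.seg Lt) (Elem.seg Li') := by
  have hmem : Elem.seg Lt ∈ R.elems := Or.inr ⟨Lt, hLt, rfl⟩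
  have hnot' : ¬ (Lt.carrier ⊆ regionA (diagMeet Lj.l Lj'.l)) ∨
      ¬ (Lt.carrier ⊆ regionB (diagMeet Li.r Li'.r)) := by
    by_contra h
    push_neg at h
    exact hnot ⟨⟨hmem, h.1⟩, ⟨hmem, h.2⟩⟩
  rcases hlc with ⟨hlc1, hlc2⟩
  rcases hrc with ⟨hrc1, hrc2⟩
  rcases hnot' with h | h
  · obtain ⟨p, hp, hpA⟩ := not_subset.mp h
    have hpB := (hsub hp).1
    simp only [regionA, regionB, diagMeet, mem_setOf_eq, mem_compl_iff, not_and_or,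
      not_le] at hpA hpB
    have hd : Lj.l.1 + Lj'.l.2 - Lj'.l.1 - Lj.l.1 = Lj'.l.2 - Lj'.l.1 := by ring
    rw [hd] at hpA hpB
    rcases hpA with h1 | h1
    · -- p.1 < Lj.l.1 : p in shadow of Lj'.l
      have h2 : p.2 - p.1 < Lj'.l.2 - Lj'.l.1 := by
        rcases hpB with h2 | h2
        · exact absurd h1.le (not_le.mpr h2)
        · exact h2
      refine Or.inr (Or.inl (Or.inl ⟨p, hp, ?_⟩))
      refine mem_biUnion (left_mem_segment ℝ Lj'.l Lj'.r) ?_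
      exact ⟨le_trans h1.le hlc1, h2.le⟩
    · -- Lj'.l.2 - Lj'.l.1 < p.2 - p.1 : Lj.l in shadow of p
      have h2 : Lj.l.1 < p.1 := by
        rcases hpB with h2 | h2
        · exact h2
        · exact absurd h1.le (not_le.mpr h2)
      refine Or.inl (Or.inr ⟨Lj.l, left_mem_segment ℝ Lj.l Lj.r, ?_⟩)
      exact mem_biUnion hp ⟨h2.le, le_trans hlc2 h1.le⟩
  · obtain ⟨p, hp, hpB⟩ := not_subset.mp h
    have hpA := (hsub hp).2
    simp only [regionA, regionB, diagMeet, mem_setOf_eq, mem_compl_iff, not_and_or,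
      not_le] at hpA hpB
    have hd : Li.r.1 + Li'.r.2 - Li'.r.1 - Li.r.1 = Li'.r.2 - Li'.r.1 := by ring
    rw [hd] at hpA hpB
    rcases hpB with h1 | h1
    · -- Li.r.1 < p.1 : Li'.r in shadow of p
      have h2 : Li'.r.2 - Li'.r.1 < p.2 - p.1 := by
        rcases hpA with h2 | h2
        · exact absurd h1.le (not_le.mpr h2)
        · exact h2
      refine Or.inr (Or.inr (Or.inr (Or.inr ⟨Li'.r, right_mem_segment ℝ Li'.l Li'.r, ?_⟩)))
      exact mem_biUnion hp ⟨le_trans hrc1 h1.le, h2.le⟩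
    · -- p.2 - p.1 < Li'.r.2 - Li'.r.1 : p in shadow of Li.r
      have h2 : p.1 < Li.r.1 := by
        rcases hpA with h2 | h2
        · exact h2
        · exact absurd h1.le (not_le.mpr h2)
      refine Or.inr (Or.inr (Or.inl (Or.inl ⟨p, hp, ?_⟩)))
      refine mem_biUnion (right_mem_segment ℝ Li.l Li.r) ?_
      exact ⟨h2.le, le_trans h1.le hrc2⟩
end

section
/- Let (𝒫,𝓛) be a horizontal shadow representation, p ∈ 𝒫, and x ∈ H(p) (so x is either a point p′ ∈ 𝒫 ∖ {p} with p′ ∈ S_p, or a segment L′ ∈ 𝓛 with L′ ∩ S_p ≠ ∅ and p ∉ S_{L′}). Then every segment L ∈ N(p) (i.e., with p ∈ S_L) is adjacent to x: if x is a point then x ∈ S_L, and if x is a segment then x ∩ S_L ≠ ∅. In particular N(p) ⊆ N(x) when x is a point. -/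
open Set

/-- The hovering set `H(p)` of a point `p`, as a set of elements. -/
def HoverSet (R : HSR) (p : Pt) : Set Elem :=
  {x | (∃ p' ∈ R.P, p' ≠ p ∧ p' ∈ ptShadow p ∧ x = Elem.pt p') ∨
    (∃ L ∈ R.Ls, (L.carrier ∩ ptShadow p).Nonempty ∧ p ∉ setShadow L.carrier ∧
      x = Elem.seg L)}

lemma ptShadow_trans {a b c : Pt} (h1 : a ∈ ptShadow b) (h2 : b ∈ ptShadow c) :
    a ∈ ptShadow c := ⟨h1.1.trans h2.1, h1.2.trans h2.2⟩

/-- Every neighbour `L ∈ N(p)` of a point `p` is adjacent to every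
element `x` of the hovering set `H(p)`: if `x` is a point `p′` then `p′ ∈ S_L`, and if
`x` is a segment `L′` then `L′ ∩ S_L ≠ ∅`. In particular `N(p) ⊆ N(x)` for points `x`. -/
theorem stmt17 (R : HSR) (p : Pt) (hp : p ∈ R.P) (x : Elem) (hx : x ∈ HoverSet R p) :
    ∀ L ∈ R.Ls, p ∈ setShadow L.carrier →
      (∀ p' : Pt, x = Elem.pt p' → p' ∈ setShadow L.carrier) ∧
      (∀ L' : HSeg, x = Elem.seg L' → (L'.carrier ∩ setShadow L.carrier).Nonempty) := by
  intro L hL hpL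
  obtain ⟨t, ht, hpt⟩ := mem_iUnion₂.1 hpL
  constructor
  · rintro p' rfl
    rcases hx with ⟨q, _, _, hq, heq⟩ | ⟨L', _, _, _, heq⟩
    · cases heq; exact mem_iUnion₂.2 ⟨t, ht, ptShadow_trans hq hpt⟩
    · cases heq
  · rintro L' rfl
    rcases hx with ⟨q, _, _, _, heq⟩ | ⟨L'', _, ⟨q, hqL, hqp⟩, _, heq⟩
    · cases heq
    · cases heq
      exact ⟨q, hqL, mem_iUnion₂.2 ⟨t, ht, ptShadow_trans hqp hpt⟩⟩
end

section
/- Let (𝒫,𝓛) be a canonical horizontal shadow representation in general position such that the graph G(𝒫,𝓛) is connected. Let D ⊆ 𝒫 ∪ 𝓛 be a dominating set of 𝒫 ∪ 𝓛 of minimum cardinality, and suppose there exists p ∈ D ∩ 𝒫 with (N(p) ∪ H(p)) ∩ D ≠ ∅. Then there exists a dominating set D′ of 𝒫 ∪ 𝓛 with |D′| = |D| and |D′ ∩ 𝒫| = |D ∩ 𝒫| − 1. -/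
open Set

/-- Adjacency of elements is symmetric. -/
lemma elemAdj_symm : ∀ {x y : Elem}, ElemAdj x y → ElemAdj y x := by
  intro x y h
  match x, y with
  | .pt _, .pt _ => exact h.elim
  | .pt _, .seg _ => exact h
  | .seg _, .pt _ => exact h
  | .seg _, .seg _ => exact h.symm

/-- The graph `G(𝒫,𝓛)` on the elements of the representation. -/
def graphOf (R : HSR) : SimpleGraph R.elems where
  Adj x y := x ≠ y ∧ ElemAdj x.1 y.1
  symm := by
    constructor
    intro x y h
    exact ⟨h.1.symm, elemAdj_symm h.2⟩
  loopless := by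
    constructor
    intro x h
    exact h.1 rfl

/-- The neighbourhood `N(p)` of a point `p`, as a set of elements. -/
def NElemSet (R : HSR) (p : Pt) : Set Elem :=
  {x | ∃ L ∈ R.Ls, p ∈ setShadow L.carrier ∧ x = Elem.seg L}

/-- A representation is canonical if every point has a segment in its hovering set. -/
def Canonical (R : HSR) : Prop := ∀ p ∈ R.P, ∃ L ∈ R.Ls, Elem.seg L ∈ HoverSet R p

/-!
Let `p ∈ D` be a point and `d ∈ D` a member of `N(p) ∪ H(p)`. A segment `L₁` meeting `S_p`
(or a point of `S_p`) is adjacent to every neighbour `L` of `p`, since `S_p ⊆ S_L`.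
Canonicity supplies such a segment `Lh ∈ H(p)`, and connectivity a segment `Ln ∈ N(p)`.
If `d ∈ N(p)`, then `d` dominates `p` and `Lh` dominates `N(p)`, so `p` may be swapped for `Lh`;
if `d ∈ H(p)`, then `d` dominates `N(p)` and `Ln` dominates `p`, so `p` may be swapped for `Ln`.
By minimality of `D` the new segment is not already in `D`, so the swap keeps `|D|`.
-/

lemma ptShadow_trans_s18 {q p t : Pt} (h₁ : q ∈ ptShadow p) (h₂ : p ∈ ptShadow t) :
    q ∈ ptShadow t :=
  ⟨h₁.1.trans h₂.1, h₁.2.trans h₂.2⟩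

lemma mem_setShadow {p : Pt} {S : Set Pt} : p ∈ setShadow S ↔ ∃ t ∈ S, p ∈ ptShadow t := by
  simp [setShadow]

lemma mem_setShadow_of_mem_ptShadow_s18 {q p : Pt} {S : Set Pt} (h₁ : q ∈ ptShadow p)
    (h₂ : p ∈ setShadow S) : q ∈ setShadow S := by
  obtain ⟨t, ht, hpt⟩ := mem_setShadow.1 h₂
  exact mem_setShadow.2 ⟨t, ht, ptShadow_trans_s18 h₁ hpt⟩

lemma HSR.elems_finite (R : HSR) : R.elems.Finite :=
  (R.finP.image _).union (R.finL.image _)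

lemma HSR.mem_Ls_of_seg_mem_elems {R : HSR} {L : HSeg} (h : Elem.seg L ∈ R.elems) : L ∈ R.Ls := by
  obtain ⟨_, -, h⟩ | ⟨L', hL', h⟩ := h
  · cases h
  · cases h; exact hL'

def AdjNeighbors (R : HSR) (p : Pt) (x : Elem) : Prop :=
  ∀ L ∈ R.Ls, p ∈ setShadow L.carrier → ElemAdj (Elem.seg L) x

lemma adjNeighbors_seg_of_inter_ptShadow {R : HSR} {p : Pt} {L₁ : HSeg}
    (h : (L₁.carrier ∩ ptShadow p).Nonempty) : AdjNeighbors R p (Elem.seg L₁) := by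
  obtain ⟨q, hqL₁, hqp⟩ := h
  exact fun _ _ hpL => Or.inr ⟨q, hqL₁, mem_setShadow_of_mem_ptShadow_s18 hqp hpL⟩

lemma adjNeighbors_of_mem_hoverSet {R : HSR} {p : Pt} {x : Elem} (hx : x ∈ HoverSet R p) :
    AdjNeighbors R p x := by
  obtain ⟨p', -, -, hp'p, rfl⟩ | ⟨L₁, -, hL₁p, -, rfl⟩ := hx
  · exact fun _ _ hpL => mem_setShadow_of_mem_ptShadow_s18 hp'p hpL
  · exact adjNeighbors_seg_of_inter_ptShadow hL₁p

lemma ne_pt_of_mem_hoverSet {R : HSR} {p : Pt} {x : Elem} (hx : x ∈ HoverSet R p) :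
    x ≠ Elem.pt p := by
  rintro rfl
  obtain ⟨_, -, hne, -, h⟩ | ⟨_, -, -, -, h⟩ := hx
  · exact hne (Elem.pt.inj h).symm
  · cases h

lemma Canonical.exists_seg_inter_ptShadow {R : HSR} (hcan : Canonical R) {p : Pt}
    (hp : p ∈ R.P) : ∃ L ∈ R.Ls, (L.carrier ∩ ptShadow p).Nonempty := by
  obtain ⟨L, hL, ⟨_, -, -, -, h⟩ | ⟨L', -, hL'p, -, h⟩⟩ := hcan p hp
  · cases h
  · cases h; exact ⟨L, hL, hL'p⟩

lemma exists_mem_setShadow_of_connected {R : HSR} (hconn : (graphOf R).Connected) {p : Pt}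
    (hp : p ∈ R.P) {L₀ : HSeg} (hL₀ : L₀ ∈ R.Ls) : ∃ L ∈ R.Ls, p ∈ setShadow L.carrier := by
  let x : R.elems := ⟨Elem.pt p, Or.inl ⟨p, hp, rfl⟩⟩
  have : Nontrivial R.elems :=
    nontrivial_of_ne x ⟨Elem.seg L₀, Or.inr ⟨L₀, hL₀, rfl⟩⟩
      (fun h => by cases congrArg Subtype.val h)
  obtain ⟨⟨y, hy⟩, -, hpy⟩ := hconn.preconnected.exists_adj_of_nontrivial x
  cases y with
  | pt _ => exact hpy.elim
  | seg L => exact ⟨L, R.mem_Ls_of_seg_mem_elems hy, hpy⟩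

lemma Dominates.of_sdiff_pt {R : HSR} {D D' : Set Elem} (hdom : Dominates D R.elems) {p : Pt}
    (hsub : D \ {Elem.pt p} ⊆ D') {x y : Elem} (hx : x ∈ D') (hpx : ElemAdj (Elem.pt p) x)
    (hy : y ∈ D') (hNy : AdjNeighbors R p y) : Dominates D' R.elems := by
  intro z hz
  rcases hdom z hz with hzD | ⟨e, heD, hze⟩
  · by_cases hzp : z = Elem.pt p
    · exact hzp ▸ Or.inr ⟨x, hx, hpx⟩
    · exact Or.inl (hsub ⟨hzD, hzp⟩)
  · by_cases hep : e = Elem.pt p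
    · subst hep
      cases z with
      | pt _ => exact hze.elim
      | seg L => exact Or.inr ⟨y, hy, hNy L (R.mem_Ls_of_seg_mem_elems hz) hze⟩
    · exact Or.inr ⟨e, hsub ⟨heD, hep⟩, hze⟩

lemma exists_dominating_swap {R : HSR} {D : Set Elem} (hD : D ⊆ R.elems)
    (hmin : ∀ D' : Set Elem, D' ⊆ R.elems → Dominates D' R.elems → D.ncard ≤ D'.ncard)
    {p : Pt} (hp : p ∈ R.P) (hpD : Elem.pt p ∈ D) {A : HSeg} (hA : A ∈ R.Ls)
    (hdom' : Dominates (insert (Elem.seg A) (D \ {Elem.pt p})) R.elems) :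
    ∃ D' : Set Elem, D' ⊆ R.elems ∧ Dominates D' R.elems ∧ D'.ncard = D.ncard ∧
      (D ∩ (Elem.pt '' R.P)).ncard = (D' ∩ (Elem.pt '' R.P)).ncard + 1 := by
  have hfin : D.Finite := R.elems_finite.subset hD
  have hcard := ncard_sdiff_singleton_add_one hpD hfin
  have hAD : Elem.seg A ∉ D \ {Elem.pt p} := by
    intro hA'
    rw [insert_eq_of_mem hA'] at hdom'
    have := hmin _ (sdiff_subset.trans hD) hdom'
    omega
  refine ⟨_, insert_subset (Or.inr ⟨A, hA, rfl⟩) (sdiff_subset.trans hD), hdom', ?_, ?_⟩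
  · rw [ncard_insert_of_notMem hAD hfin.sdiff]
    omega
  · have hAP : Elem.seg A ∉ Elem.pt '' R.P := by rintro ⟨_, -, h⟩; cases h
    rw [insert_inter_of_notMem hAP, ← inter_sdiff_right_comm]
    exact (ncard_sdiff_singleton_add_one (s := D ∩ Elem.pt '' R.P) ⟨hpD, p, hp, rfl⟩
      (hfin.inter_of_left _)).symm

theorem stmt18_general (R : HSR) (hcan : Canonical R)
    (hconn : (graphOf R).Connected)
    (D : Set Elem) (hD : D ⊆ R.elems) (hdom : Dominates D R.elems)
    (hmin : ∀ D' : Set Elem, D' ⊆ R.elems → Dominates D' R.elems → D.ncard ≤ D'.ncard)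
    (p : Pt) (hp : p ∈ R.P) (hpD : Elem.pt p ∈ D)
    (hint : ((NElemSet R p ∪ HoverSet R p) ∩ D).Nonempty) :
    ∃ D' : Set Elem, D' ⊆ R.elems ∧ Dominates D' R.elems ∧ D'.ncard = D.ncard ∧
      (D ∩ (Elem.pt '' R.P)).ncard = (D' ∩ (Elem.pt '' R.P)).ncard + 1 := by
  obtain ⟨Lh, hLh, hLhp⟩ := hcan.exists_seg_inter_ptShadow hp
  obtain ⟨Ln, hLn, hpLn⟩ := exists_mem_setShadow_of_connected hconn hp hLh
  obtain ⟨d, hd | hd, hdD⟩ := hint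
  · obtain ⟨L, -, hpL, rfl⟩ := hd
    exact exists_dominating_swap hD hmin hp hpD hLh (hdom.of_sdiff_pt (subset_insert _ _)
      (mem_insert_of_mem _ ⟨hdD, by simp⟩) hpL (mem_insert _ _)
      (adjNeighbors_seg_of_inter_ptShadow hLhp))
  · exact exists_dominating_swap hD hmin hp hpD hLn (hdom.of_sdiff_pt (subset_insert _ _)
      (mem_insert _ _) hpLn (mem_insert_of_mem _ ⟨hdD, ne_pt_of_mem_hoverSet hd⟩)
      (adjNeighbors_of_mem_hoverSet hd))

/-- In a connected canonical representation, if a minimum dominating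
set `D` contains a point `p` with `(N(p) ∪ H(p)) ∩ D ≠ ∅`, then there is a dominating
set of the same cardinality using one point fewer. -/
theorem stmt18 (R : HSR) (hgp : GenPos R) (hcan : Canonical R)
    (hconn : (graphOf R).Connected)
    (D : Set Elem) (hD : D ⊆ R.elems) (hdom : Dominates D R.elems)
    (hmin : ∀ D' : Set Elem, D' ⊆ R.elems → Dominates D' R.elems → D.ncard ≤ D'.ncard)
    (p : Pt) (hp : p ∈ R.P) (hpD : Elem.pt p ∈ D)
    (hint : ((NElemSet R p ∪ HoverSet R p) ∩ D).Nonempty) :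
    ∃ D' : Set Elem, D' ⊆ R.elems ∧ Dominates D' R.elems ∧ D'.ncard = D.ncard ∧
      (D ∩ (Elem.pt '' R.P)).ncard = (D' ∩ (Elem.pt '' R.P)).ncard + 1 :=
  stmt18_general R hcan hconn D hD hdom hmin p hp hpD hint
end
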